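/- arXiv:2112.07795 — 3 statements merged into one kernel-verified Lean document; each statement's English description precedes it below -/
import Mathlib

section
/- Let (X,d) be a metric space, let (x_n) be a dense sequence in X, and for n,k ∈ ℕ (k ≥ 1) let η_{n,k} := η_{x_n,k} be the truncated distance functions η_{x̄,r} with x̄ = x_n, r = k. Then for all points a, b ∈ X, d(a,b) = sup over n,k of (η_{n,k}(a) − η_{n,k}(b)). -/
/-- The truncated distance function `η_{x₀,r}`. -/
noncomputable def eta {X : Type*} [MetricSpace X] (x₀ : X) (r : ℝ) (x : X) : ℝ :=
  if dist x x₀ < r then dist x x₀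
  else if dist x x₀ < 2 * r then 2 * r - dist x x₀
  else 0

lemma eta_sub_le {X : Type*} [MetricSpace X] (x₀ : X) (r : ℝ) (a b : X) :
    eta x₀ r a - eta x₀ r b ≤ dist a b := by
  have hab : dist a x₀ ≤ dist a b + dist b x₀ := dist_triangle a b x₀
  have hba : dist b x₀ ≤ dist a b + dist a x₀ := by
    calc dist b x₀ ≤ dist b a + dist a x₀ := dist_triangle b a x₀
    _ = dist a b + dist a x₀ := by rw [dist_comm]
  have ha : 0 ≤ dist a x₀ := dist_nonneg
  have hb : 0 ≤ dist b x₀ := dist_nonneg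
  have hd : 0 ≤ dist a b := dist_nonneg
  unfold eta
  split_ifs <;> linarith

/-- For a dense sequence `(x_n)` and the truncated distance functions `η_{n,k} = η_{x_n,k}`,
the distance between any two points is recovered as the supremum of the increments
`η_{n,k}(a) − η_{n,k}(b)` over all `n ∈ ℕ` and integers `k ≥ 1`. -/
theorem dist_eq_iSup_eta {X : Type*} [MetricSpace X] (x : ℕ → X) (hx : DenseRange x)
    (a b : X) :
    dist a b = ⨆ n : ℕ, ⨆ k : ℕ+, (eta (x n) ((k : ℕ) : ℝ) a - eta (x n) ((k : ℕ) : ℝ) b) := by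
  set f : ℕ → ℕ+ → ℝ := fun n k => eta (x n) ((k : ℕ) : ℝ) a - eta (x n) ((k : ℕ) : ℝ) b with hf
  have key : ∀ n k, f n k ≤ dist a b := fun n k => eta_sub_le _ _ a b
  have hbdd_inner : ∀ n, BddAbove (Set.range (f n)) := fun n =>
    ⟨dist a b, by rintro _ ⟨k, rfl⟩; exact key n k⟩
  have hinner_le : ∀ n, (⨆ k : ℕ+, f n k) ≤ dist a b := fun n => ciSup_le (key n)
  have hbdd_outer : BddAbove (Set.range fun n => ⨆ k : ℕ+, f n k) :=
    ⟨dist a b, by rintro _ ⟨n, rfl⟩; exact hinner_le n⟩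
  apply le_antisymm
  · -- dist a b ≤ sup
    apply le_of_forall_pos_le_add
    intro ε hε
    set ε' : ℝ := min (ε / 2) 1 with hε'
    have hε'pos : 0 < ε' := lt_min (by linarith) one_pos
    have hε'le : ε' ≤ ε / 2 := min_le_left _ _
    have hε'one : ε' ≤ 1 := min_le_right _ _
    obtain ⟨n, hn⟩ := (Metric.denseRange_iff.mp hx) b ε' hε'pos
    obtain ⟨N, hN⟩ := exists_nat_gt (dist a b + 1)
    set k : ℕ+ := ⟨max N 1, lt_of_lt_of_le one_pos (le_max_right _ _)⟩ with hk
    have hkN : (N : ℝ) ≤ ((k : ℕ) : ℝ) := by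
      exact_mod_cast le_max_left N 1
    have hk1 : (1 : ℝ) ≤ ((k : ℕ) : ℝ) := by
      exact_mod_cast le_max_right N 1
    have hbn : dist b (x n) < ε' := hn
    have hab : dist a (x n) ≤ dist a b + dist b (x n) := dist_triangle a b (x n)
    have hba : dist a b ≤ dist a (x n) + dist b (x n) := by
      calc dist a b ≤ dist a (x n) + dist (x n) b := dist_triangle a (x n) b
      _ = dist a (x n) + dist b (x n) := by rw [dist_comm (x n) b]
    have hbk : dist b (x n) < ((k : ℕ) : ℝ) := lt_of_lt_of_le (hbn.trans_le hε'one) hk1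
    have hak : dist a (x n) < ((k : ℕ) : ℝ) := by
      calc dist a (x n) ≤ dist a b + dist b (x n) := hab
      _ < dist a b + 1 := by linarith [hbn.trans_le hε'one]
      _ < N := hN
      _ ≤ _ := hkN
    have hfa : eta (x n) ((k : ℕ) : ℝ) a = dist a (x n) := by
      unfold eta; rw [if_pos hak]
    have hfb : eta (x n) ((k : ℕ) : ℝ) b = dist b (x n) := by
      unfold eta; rw [if_pos hbk]
    have hterm : dist a b - 2 * ε' ≤ f n k := by
      simp only [hf, hfa, hfb]; linarith
    have h1 : f n k ≤ ⨆ k : ℕ+, f n k := le_ciSup (hbdd_inner n) k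
    have h2 : (⨆ k : ℕ+, f n k) ≤ ⨆ n : ℕ, ⨆ k : ℕ+, f n k := le_ciSup hbdd_outer n
    linarith
  · exact ciSup_le hinner_le
end

section
/- Let γ : [a,b] → X be an absolutely continuous curve into a metric space with d(γ(t),γ(s)) ≤ ∫_s^t h(r) dr for all s ≤ t, where h ∈ L¹(a,b). Then for almost every t ∈ [a,b], the metric speed |γ'|(t) = lim_{s→t} d(γ(t),γ(s))/|t−s| exists and satisfies |γ'|(t) ≤ h(t) for a.e. t. -/
/-!
For `z` in a countable set dense in `γ '' [a, b]`, the real functions `t ↦ d(γ t, z)` are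
absolutely continuous with `|∂ₜ d(γ t, z)| ≤ h t` a.e., so `g := sup_z |∂ₜ d(γ t, z)|` is
integrable. Taking `z` close to `γ v` in
`d(γ u, γ v) ≤ (d(γ u, z) - d(γ v, z)) + 2 d(γ v, z)` and applying the fundamental theorem of
calculus to `d(γ ·, z)` gives `d(γ u, γ v) ≤ ∫_u^v g`. At a Lebesgue point of `g` and `h`, the
difference quotients of `γ` are squeezed between those of `d(γ ·, z)`, which tend to
`|∂ₜ d(γ t, z)|`, and those of `∫ g`, which tend to `g t`; hence they converge to `g t ≤ h t`.
-/

open MeasureTheory Set Filter Topology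

theorem tendsto_of_forall_lt_of_eventually_le {α ι β : Type*} [LinearOrder β] [TopologicalSpace β]
    [OrderTopology β] {l : Filter α} {u v : α → β} {w : ι → α → β} {A : ι → β} {B : β}
    (hw : ∀ i, Tendsto (w i) l (𝓝 (A i))) (hv : Tendsto v l (𝓝 B))
    (hA : ∀ c < B, ∃ i, c < A i) (hwu : ∀ i, ∀ᶠ x in l, w i x ≤ u x)
    (huv : ∀ᶠ x in l, u x ≤ v x) : Tendsto u l (𝓝 B) := by
  refine tendsto_order.2 ⟨fun c hc => ?_, fun c hc => ?_⟩
  · obtain ⟨i, hi⟩ := hA c hc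
    filter_upwards [(hw i).eventually (lt_mem_nhds hi), hwu i] with x h₁ h₂ using h₁.trans_le h₂
  · filter_upwards [hv.eventually (gt_mem_nhds hc), huv] with x h₁ h₂ using h₂.trans_lt h₁

theorem ae_mem_Ioo_of_mem_Icc {a b : ℝ} : ∀ᵐ x : ℝ, x ∈ Icc a b → x ∈ Ioo a b := by
  filter_upwards [(Ioo_ae_eq_Icc (μ := volume)).mem_iff] with x hx using hx.2

section

variable {X : Type*} [PseudoMetricSpace X] {γ : ℝ → X} {a b : ℝ}

namespace AbsolutelyContinuousOnInterval

theorem of_dist_le {Y : Type*} [PseudoMetricSpace Y] {F : ℝ → Y}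
    (hF : AbsolutelyContinuousOnInterval F a b)
    (h : ∀ x ∈ uIcc a b, ∀ y ∈ uIcc a b, dist (γ x) (γ y) ≤ dist (F x) (F y)) :
    AbsolutelyContinuousOnInterval γ a b := by
  rw [absolutelyContinuousOnInterval_iff] at hF ⊢
  intro ε hε
  obtain ⟨δ, hδ, hF⟩ := hF ε hε
  refine ⟨δ, hδ, fun E hE hlen => ?_⟩
  calc _ ≤ ∑ i ∈ Finset.range E.1, dist (F (E.2 i).1) (F (E.2 i).2) :=
        Finset.sum_le_sum fun i hi => h _ (hE.1 i hi).1 _ (hE.1 i hi).2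
    _ < ε := hF E hE hlen

theorem dist_const (hγ : AbsolutelyContinuousOnInterval γ a b) (z : X) :
    AbsolutelyContinuousOnInterval (fun x => dist (γ x) z) a b :=
  hγ.of_dist_le fun x _ y _ => by rw [Real.dist_eq]; exact abs_dist_sub_le _ _ _

end AbsolutelyContinuousOnInterval

noncomputable def distSlope (γ : ℝ → X) (t s : ℝ) : ℝ := dist (γ t) (γ s) / |t - s|

theorem abs_slope_dist_le_distSlope (γ : ℝ → X) (z : X) (t s : ℝ) :
    |slope (fun x => dist (γ x) z) t s| ≤ distSlope γ t s := by
  rw [slope_def_field, abs_div, abs_sub_comm s t, distSlope, dist_comm (γ t) (γ s)]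
  gcongr
  exact abs_dist_sub_le (γ s) (γ t) z

def ControlsDist (Φ : ℝ → ℝ) (γ : ℝ → X) (S : Set ℝ) : Prop :=
  ∀ u ∈ S, ∀ v ∈ S, u ≤ v → dist (γ u) (γ v) ≤ Φ v - Φ u

theorem controlsDist_intervalIntegral {f : ℝ → ℝ} (hab : a ≤ b)
    (hf : IntervalIntegrable f volume a b)
    (h : ∀ u v, a ≤ u → u ≤ v → v ≤ b → dist (γ u) (γ v) ≤ ∫ r in u..v, f r) :
    ControlsDist (fun x => ∫ r in a..x, f r) γ (Icc a b) := by
  intro u hu v hv huv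
  have hsub : ∀ x ∈ Icc a b, uIcc a x ⊆ uIcc a b := fun x hx =>
    uIcc_of_le hab ▸ uIcc_subset_Icc (left_mem_Icc.2 hab) hx
  rw [intervalIntegral.integral_interval_sub_left (hf.mono_set (hsub v hv))
    (hf.mono_set (hsub u hu))]
  exact h u v hu.1 huv hv.2

namespace ControlsDist

variable {Φ : ℝ → ℝ} {S : Set ℝ}

theorem dist_le_dist (h : ControlsDist Φ γ S) {u v : ℝ} (hu : u ∈ S) (hv : v ∈ S) :
    dist (γ u) (γ v) ≤ dist (Φ u) (Φ v) := by
  rcases le_total u v with huv | hvu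
  · exact (h u hu v hv huv).trans (by rw [Real.dist_eq, abs_sub_comm]; exact le_abs_self _)
  · rw [dist_comm, dist_comm (Φ u)]
    exact (h v hv u hu hvu).trans (by rw [Real.dist_eq, abs_sub_comm]; exact le_abs_self _)

theorem absolutelyContinuousOnInterval (h : ControlsDist Φ γ (Icc a b)) (hab : a ≤ b)
    (hΦ : AbsolutelyContinuousOnInterval Φ a b) : AbsolutelyContinuousOnInterval γ a b :=
  hΦ.of_dist_le fun _ hx _ hy => h.dist_le_dist (uIcc_of_le hab ▸ hx) (uIcc_of_le hab ▸ hy)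

theorem continuousOn (h : ControlsDist Φ γ S) (hΦ : ContinuousOn Φ S) : ContinuousOn γ S := by
  rw [Metric.continuousOn_iff] at hΦ ⊢
  intro v hv ε hε
  obtain ⟨δ, hδ, hΦv⟩ := hΦ v hv ε hε
  exact ⟨δ, hδ, fun u hu huv => (h.dist_le_dist hu hv).trans_lt (hΦv u hu huv)⟩

theorem distSlope_le_slope (h : ControlsDist Φ γ S) {t s : ℝ} (ht : t ∈ S) (hs : s ∈ S) :
    distSlope γ t s ≤ slope Φ t s := by
  rcases lt_trichotomy t s with hts | rfl | hst
  · rw [distSlope, slope_def_field, abs_sub_comm, abs_of_pos (sub_pos.2 hts)]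
    gcongr
    exact h t ht s hs hts.le
  · simp [distSlope]
  · rw [distSlope, slope_comm, slope_def_field, abs_of_pos (sub_pos.2 hst), dist_comm]
    gcongr
    exact h s hs t ht hst.le

theorem eventually_distSlope_le_slope (h : ControlsDist Φ γ S) {t : ℝ} (hS : S ∈ 𝓝 t) :
    ∀ᶠ s in 𝓝[≠] t, distSlope γ t s ≤ slope Φ t s := by
  filter_upwards [mem_nhdsWithin_of_mem_nhds hS] with s hs
  exact h.distSlope_le_slope (mem_of_mem_nhds hS) hs

theorem le_of_tendsto (h : ControlsDist Φ γ S) {t φ L : ℝ} {u : ℝ → ℝ} (hS : S ∈ 𝓝 t)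
    (hΦ : HasDerivAt Φ φ t) (hu : Tendsto u (𝓝[≠] t) (𝓝 L))
    (hle : ∀ s, u s ≤ distSlope γ t s) : L ≤ φ := by
  refine le_of_tendsto_of_tendsto hu (hasDerivAt_iff_tendsto_slope.1 hΦ) ?_
  filter_upwards [h.eventually_distSlope_le_slope hS] with s hs using (hle s).trans hs

theorem tendsto_distSlope {ι : Type*} {z : ι → X} {δ' : ι → ℝ} {t ψ : ℝ} (h : ControlsDist Φ γ S)
    (hS : S ∈ 𝓝 t) (hΦ : HasDerivAt Φ ψ t)
    (hδ : ∀ i, HasDerivAt (fun x => dist (γ x) (z i)) (δ' i) t)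
    (hψ : ∀ c < ψ, ∃ i, c < |δ' i|) : Tendsto (distSlope γ t) (𝓝[≠] t) (𝓝 ψ) :=
  tendsto_of_forall_lt_of_eventually_le (fun i => (hasDerivAt_iff_tendsto_slope.1 (hδ i)).abs)
    (hasDerivAt_iff_tendsto_slope.1 hΦ) hψ
    (fun i => .of_forall (abs_slope_dist_le_distSlope γ (z i) t))
    (h.eventually_distSlope_le_slope hS)

end ControlsDist

theorem dist_le_integral_add_two_mul_dist {g : ℝ → ℝ} {u v : ℝ} (huv : u ≤ v)
    (hγ : AbsolutelyContinuousOnInterval γ u v) (hg : IntervalIntegrable g volume u v) (z : X)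
    (hgz : ∀ᵐ x, x ∈ Icc u v → |deriv (fun y => dist (γ y) z) x| ≤ g x) :
    dist (γ u) (γ v) ≤ (∫ x in u..v, g x) + 2 * dist (γ v) z := by
  have hδ := hγ.dist_const z
  have hint : -∫ x in u..v, deriv (fun y => dist (γ y) z) x ≤ ∫ x in u..v, g x := by
    rw [← intervalIntegral.integral_neg]
    refine intervalIntegral.integral_mono_ae_restrict huv hδ.intervalIntegrable_deriv.neg hg ?_
    filter_upwards [(ae_restrict_iff' measurableSet_Icc).2 hgz] with x hx
    exact (neg_le_abs _).trans hx
  rw [hδ.integral_deriv_eq_sub] at hint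
  linarith [dist_triangle_right (γ u) (γ v) z]

theorem controlsDist_of_abs_deriv_dist_le {g : ℝ → ℝ} {C : Set X} (hab : a ≤ b)
    (hγ : AbsolutelyContinuousOnInterval γ a b) (hC : γ '' Icc a b ⊆ closure C)
    (hg : IntervalIntegrable g volume a b)
    (hgC : ∀ z ∈ C, ∀ᵐ x, x ∈ Icc a b → |deriv (fun y => dist (γ y) z) x| ≤ g x) :
    ControlsDist (fun x => ∫ r in a..x, g r) γ (Icc a b) := by
  refine controlsDist_intervalIntegral hab hg fun u v hau huv hvb => ?_
  have hv : v ∈ Icc a b := ⟨hau.trans huv, hvb⟩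
  have hsub : uIcc u v ⊆ uIcc a b := uIcc_of_le hab ▸ uIcc_subset_Icc ⟨hau, huv.trans hvb⟩ hv
  refine le_of_forall_pos_lt_add fun ε hε => ?_
  obtain ⟨z, hzC, hz⟩ := Metric.mem_closure_iff.1 (hC ⟨v, hv, rfl⟩) (ε / 2) (half_pos hε)
  have := dist_le_integral_add_two_mul_dist huv (hγ.mono hsub) (hg.mono_set hsub) z <| by
    filter_upwards [hgC z hzC] with x hx hxuv using hx ⟨hau.trans hxuv.1, hxuv.2.trans hvb⟩
  linarith

-- A real `⨆` of an unbounded family is `0`, hence the explicit bound `B` in the next two lemmas.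
noncomputable def distDerivSup (γ : ℝ → X) (C : Set X) (x : ℝ) : ℝ :=
  ⨆ z : C, |deriv (fun y => dist (γ y) z) x|

theorem abs_deriv_dist_le_distDerivSup {C : Set X} {x B : ℝ}
    (hB : ∀ z ∈ C, |deriv (fun y => dist (γ y) z) x| ≤ B) {z : X} (hz : z ∈ C) :
    |deriv (fun y => dist (γ y) z) x| ≤ distDerivSup γ C x :=
  le_ciSup (f := fun z : C => |deriv (fun y => dist (γ y) z) x|)
    ⟨B, forall_mem_range.2 fun z => hB z z.2⟩ ⟨z, hz⟩

theorem abs_distDerivSup_le {C : Set X} (hC : C.Nonempty) {x B : ℝ}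
    (hB : ∀ z ∈ C, |deriv (fun y => dist (γ y) z) x| ≤ B) : |distDerivSup γ C x| ≤ B := by
  have : Nonempty C := hC.to_subtype
  unfold distDerivSup
  rw [abs_of_nonneg (Real.iSup_nonneg fun _ => abs_nonneg _)]
  exact ciSup_le fun z => hB z z.2

namespace ControlsDist

variable {f : ℝ → ℝ}

theorem ae_abs_deriv_dist_le (hab : a ≤ b) (hf : IntervalIntegrable f volume a b)
    (h : ControlsDist (fun x => ∫ r in a..x, f r) γ (Icc a b)) (z : X) : ∀ᵐ x, x ∈ Icc a b → |deriv (fun y => dist (γ y) z) x| ≤ f x := by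
  have hγ := h.absolutelyContinuousOnInterval hab
    (hf.absolutelyContinuousOnInterval_intervalIntegral left_mem_uIcc)
  filter_upwards [ae_mem_Ioo_of_mem_Icc, (hγ.dist_const z).ae_differentiableAt,
    hf.ae_hasDerivAt_integral] with x hIoo hδ hF hx
  rw [uIcc_of_le hab] at hδ hF
  exact h.le_of_tendsto (Icc_mem_nhds (hIoo hx).1 (hIoo hx).2) (hF hx a (left_mem_Icc.2 hab))
    (hasDerivAt_iff_tendsto_slope.1 (hδ hx).hasDerivAt).abs (abs_slope_dist_le_distSlope γ z x)

theorem ae_forall_abs_deriv_dist_le {C : Set X} (hC : C.Countable) (hab : a ≤ b)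
    (hf : IntervalIntegrable f volume a b)
    (h : ControlsDist (fun x => ∫ r in a..x, f r) γ (Icc a b)) :
    ∀ᵐ x, x ∈ Icc a b → ∀ z ∈ C, |deriv (fun y => dist (γ y) z) x| ≤ f x := by
  have : Countable C := hC.to_subtype
  filter_upwards [ae_all_iff.2 fun z : C => h.ae_abs_deriv_dist_le hab hf z] with x hx hxI z hz
  exact hx ⟨z, hz⟩ hxI

theorem intervalIntegrable_distDerivSup {C : Set X} (hC : C.Countable) (hCne : C.Nonempty)
    (hab : a ≤ b) (hf : IntervalIntegrable f volume a b)
    (h : ControlsDist (fun x => ∫ r in a..x, f r) γ (Icc a b)) :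
    IntervalIntegrable (distDerivSup γ C) volume a b := by
  have : Countable C := hC.to_subtype
  have hmeas : Measurable (distDerivSup γ C) := Measurable.iSup fun _ => (measurable_deriv _).abs
  refine hf.mono_fun' hmeas.aestronglyMeasurable ?_
  rw [EventuallyLE, uIoc_of_le hab, ae_restrict_iff' measurableSet_Ioc]
  filter_upwards [h.ae_forall_abs_deriv_dist_le hC hab hf] with x hx hxI
  exact abs_distDerivSup_le hCne (hx (Ioc_subset_Icc_self hxI))

theorem ae_exists_tendsto_distSlope (hab : a ≤ b) (hf : IntervalIntegrable f volume a b)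
    (h : ControlsDist (fun x => ∫ r in a..x, f r) γ (Icc a b)) :
    ∀ᵐ t, t ∈ Ioo a b → ∃ L, Tendsto (distSlope γ t) (𝓝[≠] t) (𝓝 L) ∧ L ≤ f t := by
  have hF := hf.absolutelyContinuousOnInterval_intervalIntegral left_mem_uIcc
  have hγ := h.absolutelyContinuousOnInterval hab hF
  have hcont := h.continuousOn (uIcc_of_le hab ▸ hF.continuousOn)
  obtain ⟨C, hCc, hC⟩ := (isCompact_Icc.image_of_continuousOn hcont).isSeparable
  have hCne : C.Nonempty := closure_nonempty_iff.1 ⟨_, hC ⟨a, left_mem_Icc.2 hab, rfl⟩⟩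
  have : Nonempty C := hCne.to_subtype
  have : Countable C := hCc.to_subtype
  have hbound := h.ae_forall_abs_deriv_dist_le hCc hab hf
  have hg := h.intervalIntegrable_distDerivSup hCc hCne hab hf
  have hG := controlsDist_of_abs_deriv_dist_le hab hγ hC hg fun z hz => by
    filter_upwards [hbound] with x hx hxI using abs_deriv_dist_le_distDerivSup (hx hxI) hz
  filter_upwards [ae_all_iff.2 fun z : C => (hγ.dist_const z).ae_differentiableAt,
    hf.ae_hasDerivAt_integral, hg.ae_hasDerivAt_integral] with t hδ hF hG' ht
  rw [uIcc_of_le hab] at hδ hF hG'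
  have htI := Ioo_subset_Icc_self ht
  have hS : Icc a b ∈ 𝓝 t := Icc_mem_nhds ht.1 ht.2
  have hspeed := hG.tendsto_distSlope hS (hG' htI a (left_mem_Icc.2 hab))
    (fun z => (hδ z htI).hasDerivAt) fun c hc => exists_lt_of_lt_ciSup hc
  exact ⟨_, hspeed, h.le_of_tendsto hS (hF htI a (left_mem_Icc.2 hab)) hspeed fun _ => le_rfl⟩

end ControlsDist

end

/-- If `γ : [a,b] → X` is an absolutely continuous curve with integrable bound `h`
(`dist (γ s) (γ t) ≤ ∫_s^t h` for all `s ≤ t`), then for almost every `t ∈ [a,b]` the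
metric speed `|γ'|(t) = lim_{s→t} dist (γ t) (γ s) / |t-s|` exists and is at most `h t`. -/
theorem metric_speed_exists_ae {X : Type*} [MetricSpace X]
    (a b : ℝ) (hab : a ≤ b) (γ : ℝ → X)
    (h : ℝ → ℝ) (hh : IntegrableOn h (Set.Icc a b))
    (hAC : ∀ s t : ℝ, a ≤ s → s ≤ t → t ≤ b →
      dist (γ s) (γ t) ≤ ∫ r in s..t, h r) :
    ∀ᵐ t ∂(volume.restrict (Set.Icc a b)),
      ∃ L : ℝ, Tendsto (fun s => dist (γ t) (γ s) / |t - s|)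
          (nhdsWithin t (Set.Icc a b \ {t})) (nhds L) ∧ L ≤ h t := by
  have hh' : IntervalIntegrable h volume a b :=
    (intervalIntegrable_iff_integrableOn_Icc_of_le hab).2 hh
  have hspeed := (controlsDist_intervalIntegral hab hh' hAC).ae_exists_tendsto_distSlope hab hh'
  rw [Measure.restrict_congr_set Ioo_ae_eq_Icc.symm, ae_restrict_iff' measurableSet_Ioo]
  filter_upwards [hspeed] with t ht htI
  obtain ⟨L, hL, hLh⟩ := ht htI
  refine ⟨L, ?_, hLh⟩
  rwa [sdiff_eq, nhdsWithin_inter_of_mem (mem_nhdsWithin_of_mem_nhds (Icc_mem_nhds htI.1 htI.2))]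
end

section
/- Restriction and covering of weak upper gradients: let p ∈ (1,∞), h : X → Y, and g ∈ L^p_loc(m). (a) If g is a weak upper gradient of h, then g|_U is a weak upper gradient of h|_U for every open U ⊆ X. (b) Conversely, if (U_i)_{i∈ℕ} is an open cover of X and g_i is a weak upper gradient of h|_{U_i} for each i, then g := sup_i ĝ_i (where ĝ_i denotes the extension of g_i by zero outside U_i) is a weak upper gradient of h, provided g ∈ L^p_loc(m). -/
open MeasureTheory Set ENNReal Filter

/-- A curve in a metric space: a continuous map from a compact interval `[a,b]`. -/
structure Curve (X : Type*) [MetricSpace X] where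
  a : ℝ
  b : ℝ
  hab : a ≤ b
  toFun : ℝ → X
  cont : ContinuousOn toFun (Set.Icc a b)

namespace Curve

variable {X : Type*} [MetricSpace X]

/-- A curve is rectifiable if it has finite total variation. -/
def Rectifiable (γ : Curve X) : Prop :=
  eVariationOn γ.toFun (Set.Icc γ.a γ.b) ≠ ⊤

/-- The length of a curve: its total variation. -/
noncomputable def length (γ : Curve X) : ℝ :=
  (eVariationOn γ.toFun (Set.Icc γ.a γ.b)).toReal

/-- Arclength up to time `t`. -/
noncomputable def arclen (γ : Curve X) (t : ℝ) : ℝ :=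
  (eVariationOn γ.toFun (Set.Icc γ.a t)).toReal

/-- The unit speed parametrization of a curve. -/
noncomputable def unitParam (γ : Curve X) (s : ℝ) : X :=
  γ.toFun (sInf {t | t ∈ Set.Icc γ.a γ.b ∧ s ≤ γ.arclen t})

/-- The path integral `∫_γ ρ ds` of a Borel function along a curve, computed along
the unit speed parametrization. -/
noncomputable def pathIntegral (γ : Curve X) (ρ : X → ℝ≥0∞) : ℝ≥0∞ :=
  ∫⁻ s in Set.Icc 0 γ.length, ρ (γ.unitParam s)

/-- A curve is absolutely continuous if its increments are bounded by the integral of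
an integrable function. -/
def IsAC (γ : Curve X) : Prop :=
  ∃ h : ℝ → ℝ, IntegrableOn h (Set.Icc γ.a γ.b) ∧
    ∀ s t, γ.a ≤ s → s ≤ t → t ≤ γ.b →
      dist (γ.toFun s) (γ.toFun t) ≤ ∫ r in s..t, h r

/-- The image curve under a continuous map. -/
def map (γ : Curve X) {Y : Type*} [MetricSpace Y] (φ : X → Y) (hφ : Continuous φ) :
    Curve Y :=
  ⟨γ.a, γ.b, γ.hab, φ ∘ γ.toFun, hφ.comp_continuousOn γ.cont⟩

/-- A curve lies in a set `U`. -/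
def In (γ : Curve X) (U : Set X) : Prop :=
  ∀ t ∈ Set.Icc γ.a γ.b, γ.toFun t ∈ U

end Curve

/-- Admissibility of a Borel function for a curve family. -/
def Admissible {X : Type*} [MetricSpace X] [MeasurableSpace X]
    (ρ : X → ℝ≥0∞) (Γ : Set (Curve X)) : Prop :=
  Measurable ρ ∧ ∀ γ ∈ Γ, γ.Rectifiable → 1 ≤ γ.pathIntegral ρ

/-- The conformal `p`-modulus of a curve family. -/
noncomputable def PMod {X : Type*} [MetricSpace X] [MeasurableSpace X]
    (p : ℝ) (m : Measure X) (Γ : Set (Curve X)) : ℝ≥0∞ :=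
  ⨅ (ρ : X → ℝ≥0∞) (_ : Admissible ρ Γ), ∫⁻ x, ρ x ^ p ∂m

/-- `g` is a `p`-weak upper gradient of `h : X → Y`: the upper gradient inequality
holds along `Mod_p`-almost every curve. -/
def IsWUG {X : Type*} [MetricSpace X] [MeasurableSpace X] {Y : Type*} [PseudoMetricSpace Y]
    (p : ℝ) (m : Measure X) (h : X → Y) (g : X → ℝ≥0∞) : Prop :=
  Measurable g ∧ ∃ N : Set (Curve X), PMod p m N = 0 ∧
    ∀ γ : Curve X, γ ∉ N → γ.Rectifiable →
      ENNReal.ofReal (dist (h (γ.toFun γ.a)) (h (γ.toFun γ.b))) ≤ γ.pathIntegral g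

/-- `g` is a `p`-weak upper gradient of `h` on the set `U` (with respect to the
restricted measure and curves lying in `U`). -/
def IsWUGOn {X : Type*} [MetricSpace X] [MeasurableSpace X] {Y : Type*} [PseudoMetricSpace Y]
    (p : ℝ) (m : Measure X) (U : Set X) (h : X → Y) (g : X → ℝ≥0∞) : Prop :=
  Measurable g ∧ ∃ N : Set (Curve X), PMod p (m.restrict U) N = 0 ∧
    ∀ γ : Curve X, γ.In U → γ ∉ N → γ.Rectifiable →
      ENNReal.ofReal (dist (h (γ.toFun γ.a)) (h (γ.toFun γ.b))) ≤ γ.pathIntegral g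

/-- Local `p`-integrability of a nonnegative Borel function. -/
def LocPInt {X : Type*} [MetricSpace X] [MeasurableSpace X]
    (p : ℝ) (m : Measure X) (g : X → ℝ≥0∞) : Prop :=
  ∀ x : X, ∃ U : Set X, IsOpen U ∧ x ∈ U ∧ ∫⁻ y in U, g y ^ p ∂m < ⊤

/-- Local `p`-integrability on a subset. -/
def LocPIntOn {X : Type*} [MetricSpace X] [MeasurableSpace X]
    (p : ℝ) (m : Measure X) (U : Set X) (g : X → ℝ≥0∞) : Prop :=
  ∀ x ∈ U, ∃ V : Set X, IsOpen V ∧ x ∈ V ∧ ∫⁻ y in V ∩ U, g y ^ p ∂m < ⊤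

/-!
Restricting a weak upper gradient only shrinks the modulus (the restricted measure is smaller),
so the same exceptional family works. For a countable open cover, let `Γ_i` be the curves having a
subcurve in `U_i` that violates the upper gradient inequality for `g_i`; each `Γ_i` is
`Mod_p`-null because a function admissible for the bad subcurves, cut off outside `U_i`, is
admissible for `Γ_i`, and a countable union of null families is null. A rectifiable curve outside
`⋃ Γ_i` is cut, by a Lebesgue number of the cover, into finitely many subcurves each inside some
`U_i`; the inequality for `g_i ≤ sup_j ĝ_j` on the pieces adds up by the triangle inequality and
additivity of arclength.
-/

lemma exists_monotone_partition_Icc {a b r : ℝ} (hab : a ≤ b) (hr : 0 < r) :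
    ∃ (n : ℕ) (t : ℕ → ℝ), Monotone t ∧ (∀ k, t k ∈ Icc a b) ∧ t 0 = a ∧ t n = b ∧
      ∀ k, t (k + 1) - t k < r := by
  obtain ⟨n, hn⟩ := exists_nat_gt ((b - a) / r)
  have hn0 : (0 : ℝ) < n := (div_nonneg (sub_nonneg.2 hab) hr.le).trans_lt hn
  set τ := (b - a) / n
  have hτ0 : 0 ≤ τ := div_nonneg (sub_nonneg.2 hab) hn0.le
  have hτr : τ < r := by
    rw [div_lt_iff₀ hn0]; rwa [div_lt_iff₀ hr, mul_comm] at hn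
  refine ⟨n, fun k => min (a + k * τ) b, fun j k hjk => ?_,
    fun k => ⟨le_min (le_add_of_nonneg_right (mul_nonneg k.cast_nonneg hτ0)) hab, min_le_right _ _⟩,
    by simp [hab], by simp [τ, mul_div_cancel₀ _ hn0.ne'], fun k => ?_⟩
  · dsimp only
    gcongr
  · have : min (a + ((k + 1 : ℕ) : ℝ) * τ) b ≤ min (a + k * τ) b + τ := by
      rw [← min_add_add_right]; push_cast
      exact min_le_min (by linarith) (by linarith)
    dsimp only
    linarith

lemma setLIntegral_Ioc_eq_sum (F : ℝ → ℝ≥0∞) {c : ℕ → ℝ} (hc : Monotone c) (n : ℕ) :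
    ∫⁻ u in Ioc (c 0) (c n), F u = ∑ k ∈ Finset.range n, ∫⁻ u in Ioc (c k) (c (k + 1)), F u := by
  induction n with
  | zero => simp
  | succ n ih =>
    rw [Finset.sum_range_succ, ← ih, ← lintegral_union measurableSet_Ioc
      (Ioc_disjoint_Ioc_of_le le_rfl), Ioc_union_Ioc_eq_Ioc (hc n.zero_le) (hc n.le_succ)]

namespace Curve

variable {X : Type*} [MetricSpace X]

def subcurve (γ : Curve X) (t₀ t₁ : ℝ) (h₀ : γ.a ≤ t₀) (h₀₁ : t₀ ≤ t₁) (h₁ : t₁ ≤ γ.b) :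
    Curve X :=
  ⟨t₀, t₁, h₀₁, γ.toFun, γ.cont.mono (Icc_subset_Icc h₀ h₁)⟩

def HasSubcurveIn (γ : Curve X) (Γ : Set (Curve X)) : Prop :=
  ∃ t₀ t₁ h₀ h₀₁ h₁, γ.subcurve t₀ t₁ h₀ h₀₁ h₁ ∈ Γ

lemma arclen_left (γ : Curve X) : γ.arclen γ.a = 0 := by
  simp [arclen, eVariationOn.subsingleton]

lemma In.unitParam_mem {γ : Curve X} {U : Set X} (hγ : γ.In U) {s : ℝ} (hs : s ≤ γ.length) :
    γ.unitParam s ∈ U := by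
  have hb : γ.b ∈ {t | t ∈ Icc γ.a γ.b ∧ s ≤ γ.arclen t} := ⟨⟨γ.hab, le_rfl⟩, hs⟩
  exact hγ _ ⟨le_csInf ⟨_, hb⟩ fun t ht => ht.1.1, csInf_le ⟨γ.a, fun t ht => ht.1.1⟩ hb⟩

lemma In.pathIntegral_mono {γ : Curve X} {U : Set X} (hγ : γ.In U) {ρ ρ' : X → ℝ≥0∞}
    (hρ : ∀ x ∈ U, ρ x ≤ ρ' x) : γ.pathIntegral ρ ≤ γ.pathIntegral ρ' :=
  setLIntegral_mono' measurableSet_Icc fun _ hs => hρ _ (hγ.unitParam_mem hs.2)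

lemma pathIntegral_eq_setLIntegral_Ioc (γ : Curve X) (ρ : X → ℝ≥0∞) :
    γ.pathIntegral ρ = ∫⁻ s in Ioc 0 γ.length, ρ (γ.unitParam s) := by
  rw [pathIntegral, ← Measure.restrict_congr_set Ioc_ae_eq_Icc]

namespace Rectifiable

variable {γ : Curve X} (hγ : γ.Rectifiable) {t₀ t₁ : ℝ}
include hγ

lemma eVariationOn_ne_top (h₀ : γ.a ≤ t₀) (h₁ : t₁ ≤ γ.b) :
    eVariationOn γ.toFun (Icc t₀ t₁) ≠ ⊤ :=
  ne_top_of_le_ne_top hγ (eVariationOn.mono _ (Icc_subset_Icc h₀ h₁))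

variable (h₀ : γ.a ≤ t₀) (h₀₁ : t₀ ≤ t₁) (h₁ : t₁ ≤ γ.b)
include h₀ h₀₁ h₁

lemma subcurve : (γ.subcurve t₀ t₁ h₀ h₀₁ h₁).Rectifiable :=
  hγ.eVariationOn_ne_top h₀ h₁

lemma arclen_subcurve {t : ℝ} (ht₀ : t₀ ≤ t) (ht : t ≤ γ.b) :
    γ.arclen t = γ.arclen t₀ + (γ.subcurve t₀ t₁ h₀ h₀₁ h₁).arclen t := by
  have key := eVariationOn.Icc_add_Icc γ.toFun (s := univ) h₀ ht₀ (mem_univ t₀)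
  simp only [univ_inter] at key
  rw [arclen, arclen, Curve.subcurve, arclen, ← key, ENNReal.toReal_add
    (hγ.eVariationOn_ne_top le_rfl (ht₀.trans ht)) (hγ.eVariationOn_ne_top h₀ ht)]

omit h₀₁ h₁ in
lemma arclen_le_arclen {t : ℝ} (ht₀ : t₀ ≤ t) (ht : t ≤ γ.b) : γ.arclen t₀ ≤ γ.arclen t := by
  rw [hγ.arclen_subcurve h₀ ht₀ ht ht₀ ht]
  exact le_add_of_nonneg_right ENNReal.toReal_nonneg

lemma unitParam_subcurve {s : ℝ} (hs : s ∈ Ioc 0 (γ.subcurve t₀ t₁ h₀ h₀₁ h₁).length) :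
    (γ.subcurve t₀ t₁ h₀ h₀₁ h₁).unitParam s = γ.unitParam (s + γ.arclen t₀) := by
  set δ := γ.subcurve t₀ t₁ h₀ h₀₁ h₁
  set Aδ := {t | t ∈ Icc δ.a δ.b ∧ s ≤ δ.arclen t}
  set Aγ := {t | t ∈ Icc γ.a γ.b ∧ s + γ.arclen t₀ ≤ γ.arclen t}
  have ht₁ : t₁ ∈ Aδ := ⟨⟨h₀₁, le_rfl⟩, hs.2⟩
  have hsub : Aδ ⊆ Aγ := fun t ⟨⟨ht₀, ht⟩, hst⟩ =>
    ⟨⟨h₀.trans ht₀, ht.trans h₁⟩, by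
      rw [hγ.arclen_subcurve h₀ h₀₁ h₁ ht₀ (ht.trans h₁)]; linarith⟩
  have hbdd : BddBelow Aγ := ⟨γ.a, fun t ht => ht.1.1⟩
  -- before `t₀` the arclength is at most `γ.arclen t₀ < s + γ.arclen t₀`
  have hAγ : ∀ t ∈ Aγ, t ≤ t₁ → t ∈ Aδ := by
    intro t ht htt
    have ht₀ : t₀ ≤ t := by
      by_contra! hlt
      linarith [hγ.arclen_le_arclen ht.1.1 hlt.le (h₀₁.trans h₁), ht.2, hs.1]
    exact ⟨⟨ht₀, htt⟩, by linarith [hγ.arclen_subcurve h₀ h₀₁ h₁ ht₀ ht.1.2, ht.2]⟩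
  have hInf : sInf Aδ = sInf Aγ := by
    refine le_antisymm (le_csInf ⟨t₁, hsub ht₁⟩ fun t ht => ?_)
      (csInf_le_csInf hbdd ⟨t₁, ht₁⟩ hsub)
    rcases le_or_gt t t₁ with htt | htt
    · exact csInf_le (hbdd.mono hsub) (hAγ t ht htt)
    · exact (csInf_le (hbdd.mono hsub) ht₁).trans htt.le
  exact congrArg γ.toFun hInf

lemma pathIntegral_subcurve (ρ : X → ℝ≥0∞) :
    (γ.subcurve t₀ t₁ h₀ h₀₁ h₁).pathIntegral ρ
      = ∫⁻ u in Ioc (γ.arclen t₀) (γ.arclen t₁), ρ (γ.unitParam u) := by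
  set δ := γ.subcurve t₀ t₁ h₀ h₀₁ h₁
  set c := γ.arclen t₀
  have hlen : γ.arclen t₁ = c + δ.length := hγ.arclen_subcurve h₀ h₀₁ h₁ h₀₁ h₁
  calc δ.pathIntegral ρ = ∫⁻ s in Ioc 0 δ.length, ρ (γ.unitParam (s + c)) := by
        rw [pathIntegral_eq_setLIntegral_Ioc]
        exact setLIntegral_congr_fun measurableSet_Ioc fun s hs =>
          congrArg ρ (hγ.unitParam_subcurve h₀ h₀₁ h₁ hs)
    _ = ∫⁻ s in (· + c) ⁻¹' Ioc c (c + δ.length), ρ (γ.unitParam (s + c)) := by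
        rw [preimage_add_const_Ioc, sub_self, add_sub_cancel_left]
    _ = ∫⁻ u in Ioc (γ.arclen t₀) (γ.arclen t₁), ρ (γ.unitParam u) := by
        rw [hlen]
        exact (measurePreserving_add_right volume c).setLIntegral_comp_preimage_emb
          (measurableEmbedding_addRight c) (fun u => ρ (γ.unitParam u)) (Ioc c (c + δ.length))

lemma pathIntegral_subcurve_le (ρ : X → ℝ≥0∞) :
    (γ.subcurve t₀ t₁ h₀ h₀₁ h₁).pathIntegral ρ ≤ γ.pathIntegral ρ := by
  rw [hγ.pathIntegral_subcurve h₀ h₀₁ h₁, pathIntegral_eq_setLIntegral_Ioc]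
  exact lintegral_mono_set (Ioc_subset_Ioc ENNReal.toReal_nonneg
    (hγ.arclen_le_arclen (h₀.trans h₀₁) h₁ le_rfl))

end Rectifiable

lemma exists_partition_subordinate {ι : Type*} (γ : Curve X) {U : ι → Set X}
    (hU : ∀ i, IsOpen (U i)) (hγU : γ.In (⋃ i, U i)) :
    ∃ (n : ℕ) (t : ℕ → ℝ), Monotone t ∧ (∀ k, t k ∈ Icc γ.a γ.b) ∧ t 0 = γ.a ∧ t n = γ.b ∧
      ∀ k, ∃ i, ∀ u ∈ Icc (t k) (t (k + 1)), γ.toFun u ∈ U i := by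
  choose V hVo hV using fun i => continuousOn_iff'.1 γ.cont _ (hU i)
  obtain ⟨r, hr, hball⟩ := lebesgue_number_lemma_of_metric isCompact_Icc hVo fun s hs => by
    obtain ⟨i, hi⟩ := mem_iUnion.1 (hγU s hs)
    exact mem_iUnion.2 ⟨i, ((hV i).le ⟨hi, hs⟩).1⟩
  obtain ⟨n, t, ht, htI, ht₀, htn, hgap⟩ := exists_monotone_partition_Icc γ.hab hr
  refine ⟨n, t, ht, htI, ht₀, htn, fun k => ?_⟩
  obtain ⟨i, hi⟩ := hball (t k) (htI k)
  refine ⟨i, fun u hu => ?_⟩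
  have huI : u ∈ Icc γ.a γ.b := ⟨(htI k).1.trans hu.1, hu.2.trans (htI (k + 1)).2⟩
  have huV : u ∈ V i := hi <| by
    rw [Metric.mem_ball, Real.dist_eq, abs_of_nonneg (sub_nonneg.2 hu.1)]
    linarith [hgap k, hu.2]
  exact ((hV i).ge ⟨huV, huI⟩).1

lemma Rectifiable.ofReal_dist_le_pathIntegral_of_partition {Y : Type*} [PseudoMetricSpace Y]
    (f : X → Y) {γ : Curve X} (hγ : γ.Rectifiable) {n : ℕ} {t : ℕ → ℝ} (ht : Monotone t)
    (htI : ∀ k, t k ∈ Icc γ.a γ.b) (ht₀ : t 0 = γ.a) (htn : t n = γ.b) (ρ : X → ℝ≥0∞)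
    (H : ∀ k, ENNReal.ofReal (dist (f (γ.toFun (t k))) (f (γ.toFun (t (k + 1)))))
      ≤ (γ.subcurve (t k) (t (k + 1)) (htI k).1 (ht k.le_succ) (htI (k + 1)).2).pathIntegral ρ) :
    ENNReal.ofReal (dist (f (γ.toFun γ.a)) (f (γ.toFun γ.b))) ≤ γ.pathIntegral ρ := by
  have hc : Monotone fun k => γ.arclen (t k) := fun j k hjk =>
    hγ.arclen_le_arclen (htI j).1 (ht hjk) (htI k).2
  calc ENNReal.ofReal (dist (f (γ.toFun γ.a)) (f (γ.toFun γ.b)))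
      ≤ ENNReal.ofReal
          (∑ k ∈ Finset.range n, dist (f (γ.toFun (t k))) (f (γ.toFun (t (k + 1))))) := by
        rw [← ht₀, ← htn]
        exact ENNReal.ofReal_le_ofReal (dist_le_range_sum_dist (fun k => f (γ.toFun (t k))) n)
    _ = ∑ k ∈ Finset.range n,
          ENNReal.ofReal (dist (f (γ.toFun (t k))) (f (γ.toFun (t (k + 1))))) :=
        ENNReal.ofReal_sum_of_nonneg fun _ _ => dist_nonneg
    _ ≤ ∑ k ∈ Finset.range n,
          ∫⁻ u in Ioc (γ.arclen (t k)) (γ.arclen (t (k + 1))), ρ (γ.unitParam u) :=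
        Finset.sum_le_sum fun k _ => (H k).trans_eq (hγ.pathIntegral_subcurve _ _ _ ρ)
    _ = γ.pathIntegral ρ := by
        rw [← setLIntegral_Ioc_eq_sum _ hc, ht₀, htn, arclen_left,
          pathIntegral_eq_setLIntegral_Ioc]
        rfl

end Curve

section Modulus

variable {X : Type*} [MetricSpace X] [MeasurableSpace X] {p : ℝ} {m : Measure X}

lemma PMod_le_lintegral {Γ : Set (Curve X)} {ρ : X → ℝ≥0∞} (hρ : Admissible ρ Γ) :
    PMod p m Γ ≤ ∫⁻ x, ρ x ^ p ∂m :=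
  iInf₂_le ρ hρ

lemma PMod_le_PMod_of_admissible {Γ Γ' : Set (Curve X)}
    (H : ∀ ρ, Admissible ρ Γ → Admissible ρ Γ') : PMod p m Γ' ≤ PMod p m Γ :=
  le_iInf₂ fun ρ hρ => PMod_le_lintegral (H ρ hρ)

lemma PMod_mono {Γ Γ' : Set (Curve X)} (h : Γ' ⊆ Γ) : PMod p m Γ' ≤ PMod p m Γ :=
  PMod_le_PMod_of_admissible fun _ hρ => ⟨hρ.1, fun γ hγ => hρ.2 γ (h hγ)⟩

lemma PMod_restrict_le (U : Set X) (Γ : Set (Curve X)) :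
    PMod p (m.restrict U) Γ ≤ PMod p m Γ :=
  iInf₂_mono fun _ _ => setLIntegral_le_lintegral _ _

lemma PMod_le_PMod_restrict (hp : 0 < p) {U : Set X} (hU : MeasurableSet U)
    {Γ : Set (Curve X)} (hΓ : ∀ γ ∈ Γ, γ.In U) : PMod p m Γ ≤ PMod p (m.restrict U) Γ := by
  refine le_iInf₂ fun ρ hρ => ?_
  have hadm : Admissible (U.indicator ρ) Γ :=
    ⟨hρ.1.indicator hU, fun γ hγ hrect => (hρ.2 γ hγ hrect).trans
      ((hΓ γ hγ).pathIntegral_mono fun x hx => (indicator_of_mem hx ρ).ge)⟩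
  calc PMod p m Γ ≤ ∫⁻ x, U.indicator ρ x ^ p ∂m := PMod_le_lintegral hadm
    _ = ∫⁻ x, U.indicator (fun x => ρ x ^ p) x ∂m := by
        congr 1; funext x
        by_cases hx : x ∈ U <;> simp [hx, ENNReal.zero_rpow_of_pos hp]
    _ = ∫⁻ x in U, ρ x ^ p ∂m := lintegral_indicator hU _

lemma PMod_setOf_hasSubcurveIn_le (Γ : Set (Curve X)) :
    PMod p m {γ | γ.HasSubcurveIn Γ} ≤ PMod p m Γ :=
  PMod_le_PMod_of_admissible fun ρ hρ => ⟨hρ.1, fun _ ⟨_, _, h₀, h₀₁, h₁, hδ⟩ hγ =>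
    (hρ.2 _ hδ (hγ.subcurve h₀ h₀₁ h₁)).trans (hγ.pathIntegral_subcurve_le h₀ h₀₁ h₁ ρ)⟩

lemma PMod_iUnion_eq_zero {ι : Type*} [Countable ι] (hp : 0 < p) {Γ : ι → Set (Curve X)}
    (hΓ : ∀ i, PMod p m (Γ i) = 0) : PMod p m (⋃ i, Γ i) = 0 := by
  refine le_antisymm (ENNReal.le_of_forall_pos_le_add fun ε hε _ => ?_) zero_le
  obtain ⟨δ, hδ, hδε⟩ := ENNReal.exists_pos_sum_of_countable' (ENNReal.coe_ne_zero.2 hε.ne') ι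
  have hsmall : ∀ i, ∃ ρ, Admissible ρ (Γ i) ∧ ∫⁻ x, ρ x ^ p ∂m < δ i := fun i => by
    simpa [PMod, iInf_lt_iff] using (hΓ i).trans_lt (hδ i)
  choose ρ hρ hρδ using hsmall
  have hadm : Admissible (fun x => ⨆ i, ρ i x) (⋃ i, Γ i) := by
    refine ⟨Measurable.iSup fun i => (hρ i).1, fun γ hγ hrect => ?_⟩
    obtain ⟨i, hi⟩ := mem_iUnion.1 hγ
    exact ((hρ i).2 γ hi hrect).trans
      (lintegral_mono fun s => le_iSup (fun j => ρ j (γ.unitParam s)) i)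
  calc PMod p m (⋃ i, Γ i) ≤ ∫⁻ x, (⨆ i, ρ i x) ^ p ∂m := PMod_le_lintegral hadm
    _ = ∫⁻ x, ⨆ i, ρ i x ^ p ∂m := by
        simp_rw [← ENNReal.orderIsoRpow_apply p hp, OrderIso.map_iSup]
    _ ≤ ∫⁻ x, ∑' i, ρ i x ^ p ∂m := lintegral_mono fun x => iSup_le fun i => ENNReal.le_tsum i
    _ = ∑' i, ∫⁻ x, ρ i x ^ p ∂m := lintegral_tsum fun i => ((hρ i).1.pow_const p).aemeasurable
    _ ≤ ∑' i, δ i := ENNReal.tsum_le_tsum fun i => (hρδ i).le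
    _ ≤ 0 + ε := by rw [zero_add]; exact hδε.le

end Modulus

section WeakUpperGradient

variable {X : Type*} [MetricSpace X] [MeasurableSpace X] {Y : Type*} [PseudoMetricSpace Y]
  {p : ℝ} {m : Measure X} {h : X → Y}

lemma IsWUG.isWUGOn {g : X → ℝ≥0∞} (hg : IsWUG p m h g) (U : Set X) : IsWUGOn p m U h g := by
  obtain ⟨hgm, N, hN, hgN⟩ := hg
  exact ⟨hgm, N, le_antisymm ((PMod_restrict_le U N).trans_eq hN) zero_le, fun γ _ => hgN γ⟩

lemma isWUG_iSup_of_isWUGOn_cover [OpensMeasurableSpace X] {ι : Type*} [Countable ι]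
    (hp : 0 < p) {U : ι → Set X} [∀ i, DecidablePred (· ∈ U i)] {g : ι → X → ℝ≥0∞}
    (hU : ∀ i, IsOpen (U i)) (hcover : ⋃ i, U i = univ) (hg : ∀ i, IsWUGOn p m (U i) h (g i)) :
    IsWUG p m h (fun x => ⨆ i, if x ∈ U i then g i x else 0) := by
  choose N hN hgN using fun i => (hg i).2
  set G : X → ℝ≥0∞ := fun x => ⨆ i, if x ∈ U i then g i x else 0
  set bad : ι → Set (Curve X) := fun i => {γ | γ.HasSubcurveIn {δ | δ.In (U i) ∧ δ ∈ N i}}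
  have hbad : ∀ i, PMod p m (bad i) = 0 := fun i => le_antisymm (calc
    PMod p m (bad i) ≤ PMod p m {δ | δ.In (U i) ∧ δ ∈ N i} := PMod_setOf_hasSubcurveIn_le _
    _ ≤ PMod p (m.restrict (U i)) {δ | δ.In (U i) ∧ δ ∈ N i} :=
        PMod_le_PMod_restrict hp (hU i).measurableSet fun _ hδ => hδ.1
    _ ≤ PMod p (m.restrict (U i)) (N i) := PMod_mono fun _ hδ => hδ.2
    _ = 0 := hN i) zero_le
  refine ⟨Measurable.iSup fun i => Measurable.ite (hU i).measurableSet (hg i).1 measurable_const,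
    ⋃ i, bad i, PMod_iUnion_eq_zero hp hbad, fun γ hγbad hγ => ?_⟩
  obtain ⟨n, t, ht, htI, ht₀, htn, hsub⟩ :=
    γ.exists_partition_subordinate hU fun _ _ => hcover ▸ mem_univ _
  choose I hI using hsub
  refine hγ.ofReal_dist_le_pathIntegral_of_partition h ht htI ht₀ htn G fun k => ?_
  set δ := γ.subcurve _ _ (htI k).1 (ht k.le_succ) (htI (k + 1)).2
  have hδU : δ.In (U (I k)) := hI k
  have hδN : δ ∉ N (I k) := fun hδ => hγbad (mem_iUnion.2 ⟨I k, _, _, _, _, _, hδU, hδ⟩)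
  calc _ ≤ δ.pathIntegral (g (I k)) := hgN (I k) δ hδU hδN (hγ.subcurve _ _ _)
    _ ≤ δ.pathIntegral G := hδU.pathIntegral_mono fun x hx =>
        le_iSup_of_le (I k) (by rw [if_pos hx])

end WeakUpperGradient

open Classical in
/-- Restriction and covering of weak upper gradients:
(a) a weak upper gradient of `h` restricts to a weak upper gradient of `h` on every open
set; (b) if `(U_i)` is an open cover of `X` and `g_i` is a weak upper gradient of `h`
on `U_i` for each `i`, then the pointwise supremum of the zero-extensions, provided it
is locally `p`-integrable, is a weak upper gradient of `h` on `X`. -/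
theorem restrict_and_cover_wug {X : Type*} [MetricSpace X] [MeasurableSpace X] [BorelSpace X]
    {Y : Type*} [PseudoMetricSpace Y]
    (p : ℝ) (hp : 1 < p) (m : Measure X) (h : X → Y) :
    (∀ g : X → ℝ≥0∞, LocPInt p m g → IsWUG p m h g →
      ∀ U : Set X, IsOpen U → IsWUGOn p m U h g) ∧
    (∀ (U : ℕ → Set X) (g : ℕ → X → ℝ≥0∞),
      (∀ i, IsOpen (U i)) → (⋃ i, U i) = Set.univ →
      (∀ i, IsWUGOn p m (U i) h (g i)) →
      LocPInt p m (fun x => ⨆ i, if x ∈ U i then g i x else 0) →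
      IsWUG p m h (fun x => ⨆ i, if x ∈ U i then g i x else 0)) :=
  ⟨fun _ _ hg U _ => hg.isWUGOn U,
    fun _ _ hU hcover hg _ => isWUG_iSup_of_isWUGOn_cover (zero_lt_one.trans hp) hU hcover hg⟩
end
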